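/- arXiv:2404.16539 — 7 statements merged into one kernel-verified Lean document; each statement's English description precedes it below -/
import Mathlib

section
/- For n ∈ ℕ₀, the limit as z → -n of ψ'(z)/Γ(z)² equals (n!)², where ψ is the digamma function and Γ the Gamma function. -/
open Filter Topology

/-- The digamma function ψ = Γ'/Γ on ℂ. -/
noncomputable def digamma (z : ℂ) : ℂ := deriv Complex.Gamma z / Complex.Gamma z

/-!
Write `F = 1/Γ`, an entire function. Away from the poles `ψ = -F'/F`, hence
`ψ'/Γ² = ψ' F² = F'² - F F''`, which is entire. At `-n` we have `F = 0`, and differentiating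
`F(s) = s F(s + 1)` gives `F'(-n-1) = -(n+1) F'(-n)`, so `F'(-n) = (-1)ⁿ n!` and the limit
is `(n!)²`.
-/

theorem deriv_logDeriv_mul_sq {𝕜 : Type*} [NontriviallyNormedField 𝕜] {f : 𝕜 → 𝕜} {x : 𝕜}
    (hf : DifferentiableAt 𝕜 f x) (hf' : DifferentiableAt 𝕜 (deriv f) x) (hx : f x ≠ 0) :
    deriv (logDeriv f) x * f x ^ 2 = f x * deriv (deriv f) x - deriv f x ^ 2 := by
  rw [logDeriv, deriv_div hf' hf hx]
  field_simp

namespace Complex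

noncomputable def invGamma (s : ℂ) : ℂ := (Gamma s)⁻¹

theorem differentiable_invGamma : Differentiable ℂ invGamma := differentiable_one_div_Gamma

theorem invGamma_neg_nat (n : ℕ) : invGamma (-n) = 0 := by
  simp [invGamma, Gamma_neg_nat_eq_zero]

theorem deriv_invGamma_recurrence (s : ℂ) :
    deriv invGamma s = invGamma (s + 1) + s * deriv invGamma (s + 1) := by
  have h : (fun s => s * invGamma (s + 1)) = invGamma :=
    (funext one_div_Gamma_eq_self_mul_one_div_Gamma_add_one).symm
  have hderiv : HasDerivAt (fun s => s * invGamma (s + 1))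
      (1 * invGamma (s + 1) + s * deriv invGamma (s + 1)) s :=
    (hasDerivAt_id' s).mul ((differentiable_invGamma (s + 1)).hasDerivAt.comp_add_const s 1)
  rw [h, one_mul] at hderiv
  exact hderiv.deriv

theorem deriv_invGamma_neg_nat (n : ℕ) : deriv invGamma (-n) = (-1) ^ n * n.factorial := by
  induction n with
  | zero => simp [deriv_invGamma_recurrence 0, invGamma]
  | succ n ih =>
    rw [deriv_invGamma_recurrence, show (-(n + 1 : ℕ) : ℂ) + 1 = -n by push_cast; ring, ih,
      invGamma_neg_nat, Nat.factorial_succ]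
    push_cast
    ring

-- At the poles both sides vanish through division by `Γ(-m) = 0`.
theorem digamma_eq_neg_logDeriv_invGamma : _root_.digamma = -logDeriv invGamma := by
  funext z
  by_cases hpole : ∀ m : ℕ, z ≠ -m
  · have hΓ := Gamma_ne_zero hpole
    have hderiv : HasDerivAt invGamma (-deriv Gamma z / Gamma z ^ 2) z :=
      (differentiableAt_Gamma z hpole).hasDerivAt.inv hΓ
    simp only [_root_.digamma, Pi.neg_apply, logDeriv_apply, hderiv.deriv, invGamma]
    field_simp
  · push Not at hpole
    obtain ⟨m, rfl⟩ := hpole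
    simp [_root_.digamma, logDeriv_apply, invGamma, Gamma_neg_nat_eq_zero]

theorem deriv_digamma_div_Gamma_sq {z : ℂ} (hz : invGamma z ≠ 0) :
    deriv _root_.digamma z / Gamma z ^ 2
      = deriv invGamma z ^ 2 - invGamma z * deriv (deriv invGamma) z := by
  have key := deriv_logDeriv_mul_sq (differentiable_invGamma z)
    (differentiable_invGamma.deriv z) hz
  rw [digamma_eq_neg_logDeriv_invGamma, deriv.neg', div_eq_mul_inv, ← inv_pow]
  change _ * invGamma z ^ 2 = _
  linear_combination -key

end Complex

theorem trigamma_div_Gamma_sq_tendsto (n : ℕ) :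
    Tendsto (fun z : ℂ => deriv digamma z / (Complex.Gamma z) ^ 2)
      (𝓝[≠] (-(n : ℂ))) (𝓝 ((n.factorial : ℂ) ^ 2)) := by
  open Complex in
  set g : ℂ → ℂ := fun z => deriv invGamma z ^ 2 - invGamma z * deriv (deriv invGamma) z
  have hg : Continuous g := by
    have hd := differentiable_invGamma.deriv
    exact (hd.continuous.pow 2).sub (differentiable_invGamma.continuous.mul hd.deriv.continuous)
  have hg_neg_nat : g (-n) = (n.factorial : ℂ) ^ 2 := by
    simp only [g, invGamma_neg_nat, deriv_invGamma_neg_nat, zero_mul, sub_zero, mul_pow,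
      ← pow_mul, pow_mul', neg_one_sq, one_pow, one_mul]
  have hne : ∀ᶠ z in 𝓝[≠] (-(n : ℂ)), invGamma z ≠ 0 :=
    (differentiable_invGamma _).hasDerivAt.eventually_ne
      (by simp [deriv_invGamma_neg_nat, Nat.factorial_ne_zero])
  rw [← hg_neg_nat]
  exact (hg.continuousAt.tendsto.mono_left nhdsWithin_le_nhds).congr'
    (hne.mono fun z hz => (deriv_digamma_div_Gamma_sq hz).symm)
end

section
/- For n ∈ ℕ₀, the limit as z → -n of (ψ'(z) - ψ(z)²)/Γ(z) equals (-1)ⁿ · 2 · n! · ψ(1+n), where ψ is the digamma function. -/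
/-! The reciprocal `1/Γ` is entire and vanishes exactly at the poles `-m` of `Γ`, where its zeros
are isolated. Since `ψ = -(1/Γ)' / (1/Γ)`, one gets `(ψ' - ψ²)/Γ = -(1/Γ)''` off the poles, so the
limit is `-(1/Γ)''(-n)`. Differentiating `(1/Γ)(z) = z · (1/Γ)(z + 1)` twice gives recurrences that
compute `(1/Γ)'(-n)` and `(1/Γ)''(-n)` by induction on `n`, using `ψ(z + 1) = ψ(z) + 1/z`. -/

open Filter Topology

noncomputable def invGamma (z : ℂ) : ℂ := (Complex.Gamma z)⁻¹

theorem differentiable_invGamma : Differentiable ℂ invGamma :=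
  Complex.differentiable_one_div_Gamma

theorem differentiable_deriv_invGamma : Differentiable ℂ (deriv invGamma) :=
  (differentiable_invGamma.contDiff (n := 2)).differentiable_deriv_two

theorem continuous_deriv_deriv_invGamma : Continuous (deriv (deriv invGamma)) :=
  (differentiable_deriv_invGamma.contDiff (n := 1)).continuous_deriv_one

theorem Gamma_eq_inv_invGamma : Complex.Gamma = fun z => (invGamma z)⁻¹ :=
  funext fun _ => (inv_inv _).symm

theorem invGamma_eq_mul_invGamma_add_one (z : ℂ) : invGamma z = z * invGamma (z + 1) :=
  Complex.one_div_Gamma_eq_self_mul_one_div_Gamma_add_one z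

theorem invGamma_neg_nat (n : ℕ) : invGamma (-n) = 0 := by
  simp [invGamma, Complex.Gamma_neg_nat_eq_zero]

theorem invGamma_nat_add_one (n : ℕ) : invGamma (n + 1) = (n.factorial : ℂ)⁻¹ := by
  rw [invGamma, Complex.Gamma_nat_eq_factorial]

theorem invGamma_one : invGamma 1 = 1 := by
  simp [invGamma]

theorem invGamma_eventually_ne_zero (z : ℂ) : ∀ᶠ w in 𝓝[≠] z, invGamma w ≠ 0 := by
  refine (differentiable_invGamma.analyticAt z).eventually_eq_zero_or_eventually_ne_zero.resolve_left
    fun hzero => ?_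
  have hone : invGamma 1 = 0 :=
    AnalyticOnNhd.eqOn_zero_of_preconnected_of_eventuallyEq_zero
      (fun w _ => differentiable_invGamma.analyticAt w) isPreconnected_univ (Set.mem_univ z) hzero
      (Set.mem_univ 1)
  simp [invGamma_one] at hone

theorem deriv_mul_comp_add_one {f : ℂ → ℂ} (hf : Differentiable ℂ f) (z : ℂ) :
    deriv (fun w => w * f (w + 1)) z = f (z + 1) + z * deriv f (z + 1) := by
  rw [deriv_fun_mul differentiableAt_fun_id (differentiableAt_comp_add_const.mpr (hf _)),
    deriv_id'', one_mul, deriv_comp_add_const]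

theorem deriv_invGamma_eq_add_mul (z : ℂ) :
    deriv invGamma z = invGamma (z + 1) + z * deriv invGamma (z + 1) := by
  rw [← deriv_mul_comp_add_one differentiable_invGamma]
  exact congrArg (deriv · z) (funext invGamma_eq_mul_invGamma_add_one)

theorem deriv_deriv_invGamma_eq_add_mul (z : ℂ) :
    deriv (deriv invGamma) z = 2 * deriv invGamma (z + 1) + z * deriv (deriv invGamma) (z + 1) := by
  have hrec : deriv invGamma = fun w => invGamma (w + 1) + w * deriv invGamma (w + 1) :=
    funext deriv_invGamma_eq_add_mul
  conv_lhs => rw [hrec]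
  rw [deriv_fun_add (differentiableAt_comp_add_const.mpr (differentiable_invGamma _))
      (differentiableAt_fun_id.fun_mul
        (differentiableAt_comp_add_const.mpr (differentiable_deriv_invGamma _))),
    deriv_comp_add_const, deriv_mul_comp_add_one differentiable_deriv_invGamma]
  ring

-- At the poles both sides are `0`, by the conventions `Γ(-m) = 0` and `x / 0 = 0`.
theorem digamma_eq_neg_deriv_invGamma_div (z : ℂ) :
    digamma z = -deriv invGamma z / invGamma z := by
  by_cases hz : invGamma z = 0
  · simp [digamma, Gamma_eq_inv_invGamma, hz]
  · rw [digamma, Gamma_eq_inv_invGamma, deriv_fun_inv'' (differentiable_invGamma z) hz]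
    field_simp

theorem trigamma_sub_digamma_sq_div_Gamma_eq {z : ℂ} (hz : invGamma z ≠ 0) :
    (deriv digamma z - digamma z ^ 2) / Complex.Gamma z = -deriv (deriv invGamma) z := by
  rw [funext digamma_eq_neg_deriv_invGamma_div,
    deriv_fun_div (differentiable_deriv_invGamma z).fun_neg (differentiable_invGamma z) hz,
    deriv.fun_neg, Gamma_eq_inv_invGamma]
  field_simp
  ring

theorem deriv_invGamma_neg_nat (n : ℕ) :
    deriv invGamma (-n) = (-1) ^ n * n.factorial := by
  induction n with
  | zero => simpa [invGamma_one] using deriv_invGamma_eq_add_mul 0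
  | succ n ih =>
    have h := deriv_invGamma_eq_add_mul (-(n + 1 : ℂ))
    rw [show -(n + 1 : ℂ) + 1 = -n by ring, invGamma_neg_nat, ih] at h
    rw [Nat.cast_succ, h, Nat.factorial_succ]
    push_cast
    ring

theorem deriv_invGamma_nat_add_one (n : ℕ) :
    deriv invGamma (n + 1) = -digamma (n + 1) / n.factorial := by
  have hfac : (n.factorial : ℂ) ≠ 0 := by exact_mod_cast n.factorial_ne_zero
  rw [digamma_eq_neg_deriv_invGamma_div, invGamma_nat_add_one]
  field_simp

theorem nat_add_one_ne_neg_nat (n m : ℕ) : (n + 1 : ℂ) ≠ -m := by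
  intro h
  have := congrArg Complex.re h
  simp only [Complex.add_re, Complex.natCast_re, Complex.one_re, Complex.neg_re] at this
  linarith

theorem digamma_add_one {z : ℂ} (hz : ∀ m : ℕ, z ≠ -m) : digamma (z + 1) = digamma z + z⁻¹ :=
  Complex.digamma_apply_add_one z hz

theorem deriv_deriv_invGamma_neg_nat (n : ℕ) :
    deriv (deriv invGamma) (-n) = -2 * (-1) ^ n * n.factorial * digamma (n + 1) := by
  induction n with
  | zero =>
    have h := deriv_invGamma_nat_add_one 0
    simp only [CharP.cast_eq_zero, zero_add, Nat.factorial_zero, Nat.cast_one, div_one] at h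
    rw [Nat.cast_zero, neg_zero, deriv_deriv_invGamma_eq_add_mul, zero_add, h]
    simp
  | succ n ih =>
    have h := deriv_deriv_invGamma_eq_add_mul (-(n + 1 : ℂ))
    rw [show -(n + 1 : ℂ) + 1 = -n by ring, deriv_invGamma_neg_nat, ih] at h
    have hn : (n + 1 : ℂ) ≠ 0 := Nat.cast_add_one_ne_zero n
    rw [Nat.cast_succ, h, digamma_add_one (nat_add_one_ne_neg_nat n), Nat.factorial_succ]
    push_cast
    field_simp
    ring

theorem trigamma_sub_digamma_sq_div_Gamma_tendsto (n : ℕ) :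
    Tendsto (fun z : ℂ => (deriv digamma z - (digamma z) ^ 2) / Complex.Gamma z)
      (𝓝[≠] (-(n : ℂ)))
      (𝓝 ((-1) ^ n * 2 * (n.factorial : ℂ) * digamma (1 + (n : ℂ)))) := by
  have hval : -deriv (deriv invGamma) (-(n : ℂ)) =
      (-1) ^ n * 2 * (n.factorial : ℂ) * digamma (1 + (n : ℂ)) := by
    rw [deriv_deriv_invGamma_neg_nat, add_comm]
    ring
  rw [← hval]
  refine Tendsto.congr' ?_ ((continuous_deriv_deriv_invGamma.neg.tendsto _).mono_left
    nhdsWithin_le_nhds)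
  filter_upwards [invGamma_eventually_ne_zero (-(n : ℂ))] with z hz
  exact (trigamma_sub_digamma_sq_div_Gamma_eq hz).symm
end

section
/- For z ∈ ℂ with z not a nonpositive integer and n ∈ ℕ, (ψ'(z) - ψ(z)²)/Γ(z) = (z)_n · (ψ'(z+n) - ψ(z+n)²)/Γ(z+n) + 2 ∑_{j=1}^{n} (z)_{j-1} · ψ(z+j)/Γ(z+j). -/
open Filter Topology

/-!
The function `g = 1/Γ` is entire and satisfies `g s = s * g (s + 1)` for every `s`.
Differentiating twice gives `g'' s = 2 g' (s + 1) + s g'' (s + 1)`, and unrolling this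
recurrence `n` times produces the Pochhammer symbols. Away from the poles,
`g' = -ψ/Γ` and `g'' = (ψ² - ψ')/Γ`, which turns the identity for `g` into the theorem.
-/

open Complex (Gamma)

theorem eq_ascPochhammer_eval_mul_add_sum {R : Type*} [CommRing R] {u c : R → R}
    (h : ∀ s, u s = c (s + 1) + s * u (s + 1)) (s : R) (n : ℕ) :
    u s = (ascPochhammer R n).eval s * u (s + n)
      + ∑ j ∈ Finset.Icc 1 n, (ascPochhammer R (j - 1)).eval s * c (s + j) := by
  induction n with
  | zero => simp
  | succ n ih =>
    rw [ih, Finset.sum_Icc_succ_top (by omega), h (s + n), ascPochhammer_succ_right]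
    simp only [Polynomial.eval_mul, Polynomial.eval_add, Polynomial.eval_X,
      Polynomial.eval_natCast, Nat.cast_succ, Nat.add_sub_cancel, add_assoc]
    ring

section

variable {𝕜 : Type*} [NontriviallyNormedField 𝕜] {f : 𝕜 → 𝕜}

theorem deriv_eq_of_eq_mul_comp_add_one (hf : Differentiable 𝕜 f)
    (h : ∀ s, f s = s * f (s + 1)) (s : 𝕜) :
    deriv f s = f (s + 1) + s * deriv f (s + 1) := by
  have hd : HasDerivAt (fun s => s * f (s + 1)) (1 * f (s + 1) + s * deriv f (s + 1)) s :=
    (hasDerivAt_id' s).mul ((hf (s + 1)).hasDerivAt.comp_add_const s 1)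
  rw [← funext h, one_mul] at hd
  exact hd.deriv

theorem deriv_deriv_eq_of_eq_mul_comp_add_one (hf : Differentiable 𝕜 f)
    (hf' : Differentiable 𝕜 (deriv f)) (h : ∀ s, f s = s * f (s + 1)) (s : 𝕜) :
    deriv (deriv f) s = 2 * deriv f (s + 1) + s * deriv (deriv f) (s + 1) := by
  have hd : HasDerivAt (fun s => f (s + 1) + s * deriv f (s + 1))
      (deriv f (s + 1) + (1 * deriv f (s + 1) + s * deriv (deriv f) (s + 1))) s :=
    ((hf (s + 1)).hasDerivAt.comp_add_const s 1).add
      ((hasDerivAt_id' s).mul ((hf' (s + 1)).hasDerivAt.comp_add_const s 1))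
  rw [← funext (deriv_eq_of_eq_mul_comp_add_one hf h)] at hd
  rw [hd.deriv]
  ring

end

theorem deriv_inv_Gamma {z : ℂ} (hz : ∀ m : ℕ, z ≠ -(m : ℂ)) :
    deriv Gamma⁻¹ z = -(digamma z / Gamma z) := by
  have hΓ := Complex.Gamma_ne_zero hz
  rw [deriv_inv'' (Complex.differentiableAt_Gamma z hz) hΓ, digamma]
  field_simp

-- At the poles both sides vanish: `Γ (-m) = 0`, so each is a quotient by `0`.
theorem digamma_eq_neg_deriv_inv_Gamma_div_inv_Gamma :
    digamma = -deriv Gamma⁻¹ / Gamma⁻¹ := by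
  funext s
  by_cases hs : ∀ m : ℕ, s ≠ -(m : ℂ)
  · have hΓ := Complex.Gamma_ne_zero hs
    simp only [Pi.div_apply, Pi.neg_apply, Pi.inv_apply, deriv_inv_Gamma hs]
    field_simp
  · push Not at hs
    obtain ⟨m, rfl⟩ := hs
    simp [digamma, Complex.Gamma_neg_nat_eq_zero]

theorem trigamma_sub_digamma_sq_div_Gamma {z : ℂ} (hz : ∀ m : ℕ, z ≠ -(m : ℂ)) :
    (deriv digamma z - digamma z ^ 2) / Gamma z = -deriv (deriv Gamma⁻¹) z := by
  have hΓ := Complex.Gamma_ne_zero hz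
  have hg : Differentiable ℂ Gamma⁻¹ := Complex.differentiable_one_div_Gamma
  rw [digamma_eq_neg_deriv_inv_Gamma_div_inv_Gamma,
    ((hg.deriv z).hasDerivAt.neg.div (hg z).hasDerivAt (inv_ne_zero hΓ)).deriv,
    ← digamma_eq_neg_deriv_inv_Gamma_div_inv_Gamma]
  simp only [Pi.inv_apply, Pi.neg_apply, deriv_inv_Gamma hz]
  field_simp
  ring

theorem add_natCast_ne_neg_natCast {z : ℂ} (hz : ∀ m : ℕ, z ≠ -(m : ℂ)) (k : ℕ) :
    ∀ m : ℕ, z + k ≠ -(m : ℂ) := fun m hm =>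
  hz (m + k) (by push_cast; linear_combination hm)

theorem trigamma_sub_digamma_sq_div_Gamma_shift_general (z : ℂ) (hz : ∀ m : ℕ, z ≠ -(m : ℂ))
    (n : ℕ) :
    (deriv digamma z - (digamma z) ^ 2) / Complex.Gamma z
      = (ascPochhammer ℂ n).eval z
          * ((deriv digamma (z + n) - (digamma (z + n)) ^ 2) / Complex.Gamma (z + n))
        + 2 * ∑ j ∈ Finset.Icc 1 n,
            (ascPochhammer ℂ (j - 1)).eval z * (digamma (z + j) / Complex.Gamma (z + j)) := by
  have hg : Differentiable ℂ Gamma⁻¹ := Complex.differentiable_one_div_Gamma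
  have hrec : ∀ s, deriv (deriv Gamma⁻¹) s
      = 2 * deriv Gamma⁻¹ (s + 1) + s * deriv (deriv Gamma⁻¹) (s + 1) :=
    deriv_deriv_eq_of_eq_mul_comp_add_one hg hg.deriv
      Complex.one_div_Gamma_eq_self_mul_one_div_Gamma_add_one
  have hψ (k : ℕ) : digamma (z + k) / Gamma (z + k) = -deriv Gamma⁻¹ (z + k) := by
    rw [deriv_inv_Gamma (add_natCast_ne_neg_natCast hz k), neg_neg]
  rw [trigamma_sub_digamma_sq_div_Gamma hz,
    trigamma_sub_digamma_sq_div_Gamma (add_natCast_ne_neg_natCast hz n),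
    eq_ascPochhammer_eval_mul_add_sum (u := deriv (deriv Gamma⁻¹))
      (c := fun s => 2 * deriv Gamma⁻¹ s) hrec z n]
  simp only [hψ, mul_neg, Finset.sum_neg_distrib, Finset.mul_sum, mul_left_comm (2 : ℂ)]
  ring

theorem trigamma_sub_digamma_sq_div_Gamma_shift (z : ℂ) (hz : ∀ m : ℕ, z ≠ -(m : ℂ))
    (n : ℕ) (hn : 0 < n) :
    (deriv digamma z - (digamma z) ^ 2) / Complex.Gamma z
      = (ascPochhammer ℂ n).eval z
          * ((deriv digamma (z + n) - (digamma (z + n)) ^ 2) / Complex.Gamma (z + n))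
        + 2 * ∑ j ∈ Finset.Icc 1 n,
            (ascPochhammer ℂ (j - 1)).eval z * (digamma (z + j) / Complex.Gamma (z + j)) :=
  trigamma_sub_digamma_sq_div_Gamma_shift_general z hz n
end

section
/- For real α > -1 and m, n ∈ ℕ₀, ∫_0^∞ L_m^α(z) L_n^α(z) z^α e^{-z} dz = (Γ(1+n+α)/n!) δ_{m,n}, i.e. the Laguerre polynomials are orthogonal with respect to the weight z^α e^{-z} on (0,∞) with squared norm Γ(1+n+α)/n!. -/
open Finset Filter Topology MeasureTheory

/-- The generalized Laguerre polynomial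
`L_n^α(z) = (-1)^n ∑_{k=0}^n (-α-n)_{n-k} z^k / (k! (n-k)!)`. -/
noncomputable def laguerre (n : ℕ) (α : ℂ) (z : ℂ) : ℂ :=
  (-1) ^ n * ∑ k ∈ Finset.range (n + 1),
    (ascPochhammer ℂ (n - k)).eval (-α - (n : ℂ)) * z ^ k
      / ((k.factorial : ℂ) * ((n - k).factorial : ℂ))

/-!
Expanding `L_n^α` in monomials and integrating termwise against `z^α e^{-z}` gives
`∫ z^j L_n^α = ∑_k c_{n,k} Γ(α + j + 1 + k)`. Writing `Γ(s + k) = Γ(s) (s)_k` with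
`s = α + j + 1`, the Chu–Vandermonde identity for rising factorials collapses the sum to
`(-1)^n Γ(α + j + 1) (j + 1 - n)_n / n!`, which vanishes for `j < n` (a rising factorial
through zero) and equals `(-1)^n Γ(α + n + 1)` for `j = n`. So `L_n^α` is orthogonal to all
polynomials of lower degree, and against `L_n^α` itself only its leading coefficient
`(-1)^n / n!` contributes.
-/

open Polynomial Set
open scoped Nat

theorem ascPochhammer_eval_add {R : Type*} [CommRing R] (x y : R) (n : ℕ) :
    (ascPochhammer R n).eval (x + y) = ∑ ij ∈ antidiagonal n,
      n.choose ij.1 * ((ascPochhammer R ij.1).eval x * (ascPochhammer R ij.2).eval y) := by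
  -- reduces to the Chu–Vandermonde identity for falling factorials
  have h_desc (k : ℕ) (r : R) :
      (ascPochhammer R k).eval r = (-1) ^ k * (descPochhammer ℤ k).smeval (-r) := by
    rw [descPochhammer_smeval_eq_ascPochhammer, ascPochhammer_smeval_eq_eval,
      ← descPochhammer_eval_eq_ascPochhammer, ← ascPochhammer_eval_neg_eq_descPochhammer,
      neg_neg]
  rw [h_desc, neg_add, Ring.descPochhammer_smeval_add _ (Commute.all _ _), mul_sum]
  refine sum_congr rfl fun ij hij => ?_
  rw [h_desc, h_desc, ← mem_antidiagonal.mp hij, pow_add]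
  ring

theorem ascPochhammer_eval_add_div_factorial {K : Type*} [Field K] [CharZero K]
    (x y : K) (n : ℕ) :
    (ascPochhammer K n).eval (x + y) / n ! = ∑ k ∈ range (n + 1),
      (ascPochhammer K k).eval x / k ! * ((ascPochhammer K (n - k)).eval y / (n - k)!) := by
  rw [ascPochhammer_eval_add, Nat.sum_antidiagonal_eq_sum_range_succ
    (fun i j => (n.choose i : K) * ((ascPochhammer K i).eval x * (ascPochhammer K j).eval y)),
    sum_div]
  refine sum_congr rfl fun k hk => ?_
  rw [Nat.cast_choose K (Nat.lt_succ_iff.mp (mem_range.mp hk))]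
  field_simp [n.factorial_ne_zero]

namespace Complex

theorem Gamma_add_nat_eq_mul_ascPochhammer {s : ℂ} (hs : ∀ m : ℕ, s ≠ -m) (k : ℕ) :
    Gamma (s + k) = Gamma s * (ascPochhammer ℂ k).eval s := by
  rw [← Gamma_add_nat_div_Gamma_eq s hs, mul_div_cancel₀ _ (Gamma_ne_zero hs)]

theorem ne_neg_natCast_of_re_pos {s : ℂ} (hs : 0 < s.re) (m : ℕ) : s ≠ -m := by
  rintro rfl
  simp only [neg_re, natCast_re, Left.neg_pos_iff] at hs
  linarith [m.cast_nonneg (α := ℝ)]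

end Complex

section Moments

variable {α : ℂ}

theorem re_add_natCast_add_one_pos (hα : -1 < α.re) (p : ℕ) : 0 < (α + p + 1).re := by
  simp only [Complex.add_re, Complex.natCast_re, Complex.one_re]
  linarith [p.cast_nonneg (α := ℝ)]

theorem pow_mul_cpow_mul_exp_neg_eq_exp_neg_mul_cpow {x : ℝ} (hx : 0 < x) (p : ℕ) :
    (x : ℂ) ^ p * (x : ℂ) ^ α * Complex.exp (-x)
      = ↑(Real.exp (-x)) * (x : ℂ) ^ (α + p + 1 - 1) := by
  rw [add_sub_cancel_right, add_comm α, Complex.cpow_add _ _ (by exact_mod_cast hx.ne'),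
    Complex.cpow_natCast, Complex.ofReal_exp, Complex.ofReal_neg]
  ring

theorem integrableOn_pow_mul_cpow_mul_exp_neg (hα : -1 < α.re) (p : ℕ) :
    IntegrableOn (fun x : ℝ => (x : ℂ) ^ p * (x : ℂ) ^ α * Complex.exp (-x)) (Ioi 0) :=
  (Complex.GammaIntegral_convergent (re_add_natCast_add_one_pos hα p)).congr_fun
    (fun _ hx => (pow_mul_cpow_mul_exp_neg_eq_exp_neg_mul_cpow hx p).symm) measurableSet_Ioi

theorem integral_pow_mul_cpow_mul_exp_neg (hα : -1 < α.re) (p : ℕ) :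
    ∫ x in Ioi (0 : ℝ), (x : ℂ) ^ p * (x : ℂ) ^ α * Complex.exp (-x)
      = Complex.Gamma (α + p + 1) := by
  rw [Complex.Gamma_eq_integral (re_add_natCast_add_one_pos hα p), Complex.GammaIntegral]
  exact setIntegral_congr_fun measurableSet_Ioi fun _ hx =>
    pow_mul_cpow_mul_exp_neg_eq_exp_neg_mul_cpow hx p

theorem sum_mul_pow_mul_cpow_mul_exp_neg_eq_sum {ι : Type*} (s : Finset ι) (c : ι → ℂ)
    (e : ι → ℕ) (x : ℝ) :
    (∑ i ∈ s, c i * (x : ℂ) ^ e i) * (x : ℂ) ^ α * Complex.exp (-x)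
      = ∑ i ∈ s, c i * ((x : ℂ) ^ e i * (x : ℂ) ^ α * Complex.exp (-x)) := by
  simp only [sum_mul, mul_assoc]

theorem integrableOn_sum_mul_pow_mul_cpow_mul_exp_neg (hα : -1 < α.re) {ι : Type*}
    (s : Finset ι) (c : ι → ℂ) (e : ι → ℕ) :
    IntegrableOn
      (fun x : ℝ => (∑ i ∈ s, c i * (x : ℂ) ^ e i) * (x : ℂ) ^ α * Complex.exp (-x)) (Ioi 0) := by
  simp only [sum_mul_pow_mul_cpow_mul_exp_neg_eq_sum]
  exact integrable_finsetSum _ fun i _ =>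
    (integrableOn_pow_mul_cpow_mul_exp_neg hα (e i)).const_mul (c i)

theorem integral_sum_mul_pow_mul_cpow_mul_exp_neg (hα : -1 < α.re) {ι : Type*}
    (s : Finset ι) (c : ι → ℂ) (e : ι → ℕ) :
    ∫ x in Ioi (0 : ℝ), (∑ i ∈ s, c i * (x : ℂ) ^ e i) * (x : ℂ) ^ α * Complex.exp (-x)
      = ∑ i ∈ s, c i * Complex.Gamma (α + e i + 1) := by
  simp only [sum_mul_pow_mul_cpow_mul_exp_neg_eq_sum]
  rw [integral_finsetSum _ fun i _ =>
    (integrableOn_pow_mul_cpow_mul_exp_neg hα (e i)).const_mul (c i)]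
  simp only [integral_const_mul, integral_pow_mul_cpow_mul_exp_neg hα]

end Moments

section Laguerre

variable {α : ℂ}

noncomputable def laguerreCoeff (n : ℕ) (α : ℂ) (k : ℕ) : ℂ :=
  (-1) ^ n * (ascPochhammer ℂ (n - k)).eval (-α - n) / (k ! * (n - k)!)

theorem laguerre_eq_sum_laguerreCoeff (n : ℕ) (α z : ℂ) :
    laguerre n α z = ∑ k ∈ range (n + 1), laguerreCoeff n α k * z ^ k := by
  rw [laguerre, mul_sum]
  exact sum_congr rfl fun k _ => by rw [laguerreCoeff]; ring

theorem laguerreCoeff_self (n : ℕ) (α : ℂ) : laguerreCoeff n α n = (-1) ^ n / n ! := by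
  simp [laguerreCoeff]

theorem sum_laguerreCoeff_mul_Gamma_add {s : ℂ} (hs : ∀ m : ℕ, s ≠ -m) (n : ℕ) (α : ℂ) :
    ∑ k ∈ range (n + 1), laguerreCoeff n α k * Complex.Gamma (s + k)
      = (-1) ^ n * Complex.Gamma s * (ascPochhammer ℂ n).eval (s - α - n) / n ! := by
  rw [mul_div_assoc, show s - α - n = s + (-α - n) by ring,
    ascPochhammer_eval_add_div_factorial, mul_sum]
  refine sum_congr rfl fun k _ => ?_
  rw [Complex.Gamma_add_nat_eq_mul_ascPochhammer hs, laguerreCoeff]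
  ring

theorem pow_mul_laguerre_eq_sum_laguerreCoeff (j n : ℕ) (α z : ℂ) :
    z ^ j * laguerre n α z = ∑ k ∈ range (n + 1), laguerreCoeff n α k * z ^ (j + k) := by
  rw [laguerre_eq_sum_laguerreCoeff, mul_sum]
  exact sum_congr rfl fun k _ => by ring

theorem integrableOn_pow_mul_laguerre_mul_cpow_mul_exp_neg (hα : -1 < α.re) (j n : ℕ) :
    IntegrableOn
      (fun x : ℝ => (x : ℂ) ^ j * laguerre n α x * (x : ℂ) ^ α * Complex.exp (-x)) (Ioi 0) := by
  simp only [pow_mul_laguerre_eq_sum_laguerreCoeff]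
  exact integrableOn_sum_mul_pow_mul_cpow_mul_exp_neg hα _ _ _

theorem integral_pow_mul_laguerre_mul_cpow_mul_exp_neg (hα : -1 < α.re) (j n : ℕ) :
    ∫ x in Ioi (0 : ℝ), (x : ℂ) ^ j * laguerre n α x * (x : ℂ) ^ α * Complex.exp (-x)
      = (-1) ^ n * Complex.Gamma (α + j + 1) * (ascPochhammer ℂ n).eval ((j : ℂ) + 1 - n)
          / n ! := by
  simp only [pow_mul_laguerre_eq_sum_laguerreCoeff]
  rw [integral_sum_mul_pow_mul_cpow_mul_exp_neg hα,
    ← show α + j + 1 - α - n = (j : ℂ) + 1 - n by ring,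
    ← sum_laguerreCoeff_mul_Gamma_add (Complex.ne_neg_natCast_of_re_pos
      (re_add_natCast_add_one_pos hα j))]
  refine sum_congr rfl fun k _ => ?_
  push_cast
  ring_nf

theorem integral_pow_mul_laguerre_mul_cpow_mul_exp_neg_of_lt (hα : -1 < α.re) {j n : ℕ}
    (hjn : j < n) :
    ∫ x in Ioi (0 : ℝ), (x : ℂ) ^ j * laguerre n α x * (x : ℂ) ^ α * Complex.exp (-x) = 0 := by
  obtain ⟨d, rfl⟩ : ∃ d, n = j + d + 1 := ⟨n - j - 1, by omega⟩
  rw [integral_pow_mul_laguerre_mul_cpow_mul_exp_neg hα,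
    show (j : ℂ) + 1 - (j + d + 1 : ℕ) = -d by push_cast; ring,
    ascPochhammer_eval_neg_coe_nat_of_lt (by omega)]
  simp

theorem integral_pow_mul_laguerre_mul_cpow_mul_exp_neg_self (hα : -1 < α.re) (n : ℕ) :
    ∫ x in Ioi (0 : ℝ), (x : ℂ) ^ n * laguerre n α x * (x : ℂ) ^ α * Complex.exp (-x)
      = (-1) ^ n * Complex.Gamma (α + n + 1) := by
  rw [integral_pow_mul_laguerre_mul_cpow_mul_exp_neg hα, add_sub_cancel_left,
    ascPochhammer_eval_one,
    mul_div_cancel_right₀ _ (Nat.cast_ne_zero.mpr n.factorial_ne_zero)]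

theorem integral_laguerre_mul_laguerre_mul_cpow_mul_exp_neg_of_le (hα : -1 < α.re) {m n : ℕ}
    (hmn : m ≤ n) :
    ∫ x in Ioi (0 : ℝ), laguerre m α x * laguerre n α x * (x : ℂ) ^ α * Complex.exp (-x)
      = if m = n then Complex.Gamma (α + n + 1) / n ! else 0 := by
  have h_expand (x : ℝ) : laguerre m α x * laguerre n α x * (x : ℂ) ^ α * Complex.exp (-x)
      = ∑ j ∈ range (m + 1), laguerreCoeff m α j *
          ((x : ℂ) ^ j * laguerre n α x * (x : ℂ) ^ α * Complex.exp (-x)) := by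
    rw [laguerre_eq_sum_laguerreCoeff m]
    simp only [sum_mul, mul_assoc]
  simp only [h_expand]
  rw [integral_finsetSum _ fun j _ =>
    (integrableOn_pow_mul_laguerre_mul_cpow_mul_exp_neg hα j n).const_mul _]
  simp only [integral_const_mul]
  split_ifs with h
  · subst h
    rw [sum_range_succ, sum_eq_zero fun j hj => by
      rw [integral_pow_mul_laguerre_mul_cpow_mul_exp_neg_of_lt hα (mem_range.mp hj), mul_zero],
      integral_pow_mul_laguerre_mul_cpow_mul_exp_neg_self hα, laguerreCoeff_self]
    rw [zero_add, div_mul_eq_mul_div, ← mul_assoc, ← pow_add, Even.neg_one_pow ⟨m, rfl⟩,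
      one_mul]
  · exact sum_eq_zero fun j hj => by
      rw [integral_pow_mul_laguerre_mul_cpow_mul_exp_neg_of_lt hα (by
        have := mem_range.mp hj; omega), mul_zero]

end Laguerre

theorem laguerre_orthogonality (α : ℝ) (hα : -1 < α) (m n : ℕ) :
    ∫ z in Set.Ioi (0 : ℝ),
        laguerre m (α : ℂ) z * laguerre n (α : ℂ) z * (z : ℂ) ^ (α : ℂ) * Complex.exp (-z)
    = ((Real.Gamma (1 + n + α) : ℂ) / (n.factorial : ℂ)) * (if m = n then 1 else 0) := by
  wlog hmn : m ≤ n generalizing m n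
  · have hnm : n ≠ m := by omega
    simp only [mul_comm (laguerre m _ _), this n m (by omega), if_neg hnm, if_neg hnm.symm,
      mul_zero]
  rw [integral_laguerre_mul_laguerre_mul_cpow_mul_exp_neg_of_le (by simpa using hα) hmn]
  split_ifs with h
  · rw [mul_one, ← Complex.Gamma_ofReal]
    push_cast
    ring_nf
  · simp
end

section
/- Let α ∈ ℕ (a positive integer) and m, n ∈ ℕ₀ with m, n ≥ α. Then ∫_0^∞ L_m^{-α}(z) L_n^{-α}(z) z^{-α} e^{-z} dz = ((n-α)!/n!) δ_{m,n}; in particular the integrand is integrable despite the factor z^{-α}. -/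
/-!
Write `n = α + N`. In `L_n^{-α}` the Pochhammer factor `(-N)_{n-k}` vanishes for `k < α`, so
`L_n^{-α}(z) = z^α ∑_{j ≤ N} c_{N,j} z^j` with `c_{N,j} = (-1)^{α+j} C(N,j) / (α+j)!`.
The weight `z^{-α}` cancels one factor `z^α`, so by Euler's integral the pairing of
`L_{α+M}^{-α}` and `L_{α+N}^{-α}` is `∑_{i ≤ M, j ≤ N} c_{M,i} c_{N,j} (α+i+j)!`.
As `(α+i+j)! / (α+j)! = i! C(α+i+j, i)`, the sum over `j` is, up to sign and the factor `i!`,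
the `N`-th forward difference of `x ↦ C(x, i)`, which vanishes for `i < N` and is `1` for
`i = N`. So for `M ≤ N` only the term `i = N` can survive, and it exists only when `M = N`.
-/

open Finset Filter Topology MeasureTheory

theorem neg_one_pow_add_mul_neg_one_pow_sub {R : Type*} [Monoid R] [HasDistribNeg R] (a : ℕ)
    {j N : ℕ} (h : j ≤ N) : (-1 : R) ^ (a + N) * (-1) ^ (N - j) = (-1) ^ (a + j) := by
  rw [← pow_add, show a + N + (N - j) = a + j + 2 * (N - j) by omega, pow_add, pow_mul]
  simp

theorem fwdDiff_iter_choose_of_le {i N : ℕ} (h : i ≤ N) (x : ℕ) :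
    (fwdDiff 1)^[N] (fun y ↦ y.choose i : ℕ → ℤ) x = if i = N then 1 else 0 := by
  obtain ⟨k, rfl⟩ := Nat.exists_eq_add_of_le' h
  have hi := fwdDiff_iter_choose 0 i
  simp only [add_zero, Nat.choose_zero_right, Nat.cast_one] at hi
  rw [Function.iterate_add_apply, hi]
  cases k with
  | zero => simp
  | succ k =>
    rw [if_neg (by omega), Function.iterate_succ_apply]
    simp [fwdDiff_iter_eq_sum_shift]

theorem alternating_sum_choose_mul_choose {i N : ℕ} (h : i ≤ N) (x : ℕ) :
    ∑ j ∈ range (N + 1), (-1 : ℤ) ^ j * N.choose j * (x + j).choose i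
      = if i = N then (-1) ^ N else 0 := by
  have hsign (j : ℕ) (hj : j ≤ N) : (-1 : ℤ) ^ j = (-1) ^ N * (-1) ^ (N - j) := by
    simpa using (neg_one_pow_add_mul_neg_one_pow_sub 0 hj).symm
  calc ∑ j ∈ range (N + 1), (-1 : ℤ) ^ j * N.choose j * (x + j).choose i
      = (-1) ^ N * (fwdDiff 1)^[N] (fun y ↦ y.choose i : ℕ → ℤ) x := by
        rw [fwdDiff_iter_eq_sum_shift, mul_sum]
        refine sum_congr rfl fun j hj ↦ ?_
        rw [hsign j (Nat.lt_succ_iff.mp (mem_range.mp hj)), smul_eq_mul, smul_eq_mul, mul_one]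
        ring
    _ = if i = N then (-1) ^ N else 0 := by
        rw [fwdDiff_iter_choose_of_le h, mul_ite, mul_one, mul_zero]

open Complex in
theorem pow_mul_exp_neg_eq_gammaIntegrand (p : ℕ) :
    (fun x : ℝ ↦ (x : ℂ) ^ p * exp (-x))
      = fun x : ℝ ↦ ((-x).exp : ℂ) * (x : ℂ) ^ ((p + 1 : ℂ) - 1) := by
  ext x
  rw [add_sub_cancel_right, cpow_natCast, mul_comm, ofReal_exp, ofReal_neg]

theorem integrableOn_pow_mul_exp_neg (p : ℕ) :
    IntegrableOn (fun x : ℝ ↦ (x : ℂ) ^ p * Complex.exp (-x)) (Set.Ioi 0) := by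
  rw [pow_mul_exp_neg_eq_gammaIntegrand]
  exact Complex.GammaIntegral_convergent (by simp [Nat.cast_add_one_pos])

theorem integral_pow_mul_exp_neg (p : ℕ) :
    ∫ x in Set.Ioi (0 : ℝ), (x : ℂ) ^ p * Complex.exp (-x) = p.factorial := by
  rw [pow_mul_exp_neg_eq_gammaIntegrand, ← Complex.Gamma_nat_eq_factorial,
    Complex.Gamma_eq_integral (by simp [Nat.cast_add_one_pos]), Complex.GammaIntegral]

theorem integrableOn_sum_mul_pow_mul_exp_neg {ι : Type*} (s : Finset ι) (c : ι → ℂ) (e : ι → ℕ) :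
    IntegrableOn (fun x : ℝ ↦ ∑ k ∈ s, c k * ((x : ℂ) ^ e k * Complex.exp (-x))) (Set.Ioi 0) :=
  integrable_finsetSum s fun k _ ↦ (integrableOn_pow_mul_exp_neg (e k)).const_mul (c k)

theorem integral_sum_mul_pow_mul_exp_neg {ι : Type*} (s : Finset ι) (c : ι → ℂ) (e : ι → ℕ) :
    ∫ x in Set.Ioi (0 : ℝ), ∑ k ∈ s, c k * ((x : ℂ) ^ e k * Complex.exp (-x))
      = ∑ k ∈ s, c k * (e k).factorial := by
  rw [integral_finsetSum s fun k _ ↦ (integrableOn_pow_mul_exp_neg (e k)).const_mul (c k)]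
  simp_rw [integral_const_mul, integral_pow_mul_exp_neg]

theorem ascPochhammer_eval_neg_natCast (N k : ℕ) :
    (ascPochhammer ℂ k).eval (-(N : ℂ)) = (-1) ^ k * (k.factorial * N.choose k : ℕ) := by
  rw [ascPochhammer_eval_neg_eq_descPochhammer, descPochhammer_eval_eq_descFactorial,
    Nat.descFactorial_eq_factorial_mul_choose]

noncomputable def negLaguerreCoeff (α N j : ℕ) : ℂ :=
  (-1) ^ (α + j) * N.choose j / (α + j).factorial

theorem laguerre_add_neg_eq (α N : ℕ) (z : ℂ) :
    laguerre (α + N) (-α) z = z ^ α * ∑ j ∈ range (N + 1), negLaguerreCoeff α N j * z ^ j := by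
  have harg : -(-(α : ℂ)) - ((α + N : ℕ) : ℂ) = -(N : ℂ) := by push_cast; ring
  rw [laguerre, harg, show α + N + 1 = α + (N + 1) by ring, sum_range_add,
    sum_eq_zero fun k hk ↦ ?vanish, zero_add, mul_sum, mul_sum]
  case vanish =>
    rw [ascPochhammer_eval_neg_coe_nat_of_lt (by simp at hk; omega), zero_mul, zero_div]
  refine sum_congr rfl fun j hj ↦ ?_
  have hj : j ≤ N := Nat.lt_succ_iff.mp (mem_range.mp hj)
  rw [show α + N - (α + j) = N - j by omega, ascPochhammer_eval_neg_natCast, Nat.choose_symm hj,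
    negLaguerreCoeff, ← neg_one_pow_add_mul_neg_one_pow_sub α hj]
  have : ((N - j).factorial : ℂ) ≠ 0 := Nat.cast_ne_zero.mpr (Nat.factorial_ne_zero _)
  push_cast
  field_simp
  ring

theorem sum_negLaguerreCoeff_mul_factorial (α : ℕ) {i N : ℕ} (h : i ≤ N) :
    ∑ j ∈ range (N + 1), negLaguerreCoeff α N j * (α + i + j).factorial
      = if i = N then (-1 : ℂ) ^ (α + N) * N.factorial else 0 := by
  have hterm (j : ℕ) : negLaguerreCoeff α N j * (α + i + j).factorial
      = (-1) ^ α * i.factorial * (((-1) ^ j * N.choose j * (α + i + j).choose i : ℤ) : ℂ) := by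
    have hfac : (α + i + j).factorial = (α + i + j).choose i * i.factorial * (α + j).factorial := by
      rw [← Nat.choose_mul_factorial_mul_factorial (show i ≤ α + i + j by omega),
        show α + i + j - i = α + j by omega]
    have : ((α + j).factorial : ℂ) ≠ 0 := Nat.cast_ne_zero.mpr (Nat.factorial_ne_zero _)
    rw [negLaguerreCoeff, hfac]
    push_cast
    field_simp
    ring
  simp_rw [hterm, ← mul_sum, ← Int.cast_sum, alternating_sum_choose_mul_choose h]
  split_ifs with hiN
  · subst hiN
    push_cast
    ring
  · simp

noncomputable def negLaguerreGram (α M N : ℕ) : ℂ :=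
  ∑ i ∈ range (M + 1), ∑ j ∈ range (N + 1),
    negLaguerreCoeff α M i * negLaguerreCoeff α N j * (α + i + j).factorial

theorem negLaguerreGram_comm (α M N : ℕ) : negLaguerreGram α M N = negLaguerreGram α N M := by
  rw [negLaguerreGram, negLaguerreGram, sum_comm]
  refine sum_congr rfl fun j _ ↦ sum_congr rfl fun i _ ↦ ?_
  rw [mul_comm (negLaguerreCoeff α M i), add_right_comm]

theorem negLaguerreGram_of_le (α : ℕ) {M N : ℕ} (h : M ≤ N) :
    negLaguerreGram α M N = if M = N then (N.factorial : ℂ) / (α + N).factorial else 0 := by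
  have hrow : ∀ i ∈ range (M + 1), ∑ j ∈ range (N + 1),
      negLaguerreCoeff α M i * negLaguerreCoeff α N j * (α + i + j).factorial
        = negLaguerreCoeff α M i * if i = N then (-1 : ℂ) ^ (α + N) * N.factorial else 0 := by
    intro i hi
    simp_rw [mul_assoc, ← mul_sum]
    rw [sum_negLaguerreCoeff_mul_factorial α (by simp at hi; omega)]
  rw [negLaguerreGram, sum_congr rfl hrow]
  split_ifs with hMN
  · subst hMN
    simp_rw [mul_ite, mul_zero]
    rw [sum_ite_eq' _ _ _, if_pos (self_mem_range_succ M), negLaguerreCoeff, Nat.choose_self]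
    have : ((α + M).factorial : ℂ) ≠ 0 := Nat.cast_ne_zero.mpr (Nat.factorial_ne_zero _)
    field_simp
    simp [← pow_mul]
  · exact sum_eq_zero fun i hi ↦ by rw [if_neg (by simp at hi; omega), mul_zero]

theorem negLaguerreGram_eq (α M N : ℕ) :
    negLaguerreGram α M N = if M = N then (N.factorial : ℂ) / (α + N).factorial else 0 := by
  obtain rfl | hne := eq_or_ne M N
  · exact negLaguerreGram_of_le α le_rfl
  rw [if_neg hne]
  rcases le_total M N with h | h
  · rw [negLaguerreGram_of_le α h, if_neg hne]
  · rw [negLaguerreGram_comm, negLaguerreGram_of_le α h, if_neg hne.symm]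

theorem laguerre_mul_laguerre_mul_weight_eq (α M N : ℕ) (z : ℝ) :
    laguerre (α + M) (-α) z * laguerre (α + N) (-α) z * (z : ℂ) ^ (-(α : ℂ)) * Complex.exp (-z)
      = ∑ p ∈ range (M + 1) ×ˢ range (N + 1),
          negLaguerreCoeff α M p.1 * negLaguerreCoeff α N p.2
            * ((z : ℂ) ^ (α + p.1 + p.2) * Complex.exp (-z)) := by
  rw [laguerre_add_neg_eq, laguerre_add_neg_eq, Complex.cpow_neg, Complex.cpow_natCast,
    show ∀ a b c : ℂ, a * b * (a * c) * a⁻¹ = a * (b * c) from fun a b c ↦ by field_simp,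
    sum_mul_sum, sum_product]
  simp_rw [mul_sum, sum_mul]
  refine sum_congr rfl fun i _ ↦ sum_congr rfl fun j _ ↦ ?_
  ring

theorem laguerre_neg_param_orthogonality_general (α : ℕ) (m n : ℕ)
    (hm : α ≤ m) (hn : α ≤ n) :
    IntegrableOn
      (fun z : ℝ =>
        laguerre m (-(α : ℂ)) z * laguerre n (-(α : ℂ)) z * (z : ℂ) ^ (-(α : ℂ))
          * Complex.exp (-z))
      (Set.Ioi (0 : ℝ)) ∧
    ∫ z in Set.Ioi (0 : ℝ),
        laguerre m (-(α : ℂ)) z * laguerre n (-(α : ℂ)) z * (z : ℂ) ^ (-(α : ℂ))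
          * Complex.exp (-z)
      = (((n - α).factorial : ℂ) / (n.factorial : ℂ)) * (if m = n then 1 else 0) := by
  obtain ⟨M, rfl⟩ := Nat.exists_eq_add_of_le hm
  obtain ⟨N, rfl⟩ := Nat.exists_eq_add_of_le hn
  simp_rw [laguerre_mul_laguerre_mul_weight_eq]
  refine ⟨integrableOn_sum_mul_pow_mul_exp_neg _ _ _, ?_⟩
  rw [integral_sum_mul_pow_mul_exp_neg, sum_product, ← negLaguerreGram, negLaguerreGram_eq,
    Nat.add_sub_cancel_left]
  simp only [Nat.add_left_cancel_iff, mul_ite, mul_one, mul_zero]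

theorem laguerre_neg_param_orthogonality (α : ℕ) (hα : 0 < α) (m n : ℕ)
    (hm : α ≤ m) (hn : α ≤ n) :
    IntegrableOn
      (fun z : ℝ =>
        laguerre m (-(α : ℂ)) z * laguerre n (-(α : ℂ)) z * (z : ℂ) ^ (-(α : ℂ))
          * Complex.exp (-z))
      (Set.Ioi (0 : ℝ)) ∧
    ∫ z in Set.Ioi (0 : ℝ),
        laguerre m (-(α : ℂ)) z * laguerre n (-(α : ℂ)) z * (z : ℂ) ^ (-(α : ℂ))
          * Complex.exp (-z)
      = (((n - α).factorial : ℂ) / (n.factorial : ℂ)) * (if m = n then 1 else 0) :=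
  laguerre_neg_param_orthogonality_general α m n hm hn
end

section
/- The Laguerre polynomials satisfy the generating function identity (1-t)^{-α-1} exp(tz/(t-1)) = ∑_{n=0}^∞ t^n L_n^α(z) for |t| < 1, z ∈ ℂ, α ∈ ℂ. -/
open Finset Filter Topology MeasureTheory

/-!
Expanding the exponential, `(1-t)^{-a} exp(-zt/(1-t)) = ∑_k (-zt)^k/k! (1-t)^{-a-k}`, and
expanding each power by the binomial series `(1-t)^{-b} = ∑_j (b)_j t^j/j!` turns the left-hand
side (with `a = α + 1`) into a double series over `(k, j)`. It converges absolutely, being dominated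
by the same double series for `‖a‖`, `‖z‖`, `‖t‖`, so it may be summed along the antidiagonals
`k + j = n`; since `(-α-n)_{n-k} = (-1)^{n-k} (α+1+k)_{n-k}`, the `n`-th antidiagonal sum is
`t^n L_n^α(z)`.
-/

open scoped Nat

theorem Ring.multichoose_eq_ascPochhammer_div {R : Type*} [Field R] [CharZero R] (a : R) (n : ℕ) :
    Ring.multichoose a n = (ascPochhammer R n).eval a / n ! := by
  rw [eq_div_iff (by exact_mod_cast n.factorial_ne_zero), mul_comm, ← nsmul_eq_mul,
    Ring.factorial_nsmul_multichoose_eq_ascPochhammer, Polynomial.ascPochhammer_smeval_eq_eval]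

theorem Complex.hasSum_ascPochhammer_div_factorial_mul_pow (a : ℂ) {t : ℂ} (ht : ‖t‖ < 1) :
    HasSum (fun n ↦ (ascPochhammer ℂ n).eval a / n ! * t ^ n) ((1 - t) ^ (-a)) := by
  have := (one_div_one_sub_cpow_hasFPowerSeriesOnBall_zero a).hasSum
    (y := t) (by simpa [enorm_eq_nnnorm, ← NNReal.coe_lt_coe] using ht)
  simpa [FormalMultilinearSeries.ofScalars_apply_eq, ← Ring.multichoose_eq,
    Ring.multichoose_eq_ascPochhammer_div, cpow_neg, mul_comm] using this

theorem Real.hasSum_ascPochhammer_div_factorial_mul_pow (a : ℝ) {t : ℝ} (ht : |t| < 1) :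
    HasSum (fun n ↦ (ascPochhammer ℝ n).eval a / n ! * t ^ n) ((1 - t) ^ (-a)) := by
  have := (one_div_one_sub_rpow_hasFPowerSeriesOnBall_zero a).hasSum
    (y := t) (by simpa [enorm_eq_nnnorm, ← NNReal.coe_lt_coe] using ht)
  have h1t : 0 ≤ 1 - t := by linarith [le_abs_self t]
  simpa [FormalMultilinearSeries.ofScalars_apply_eq, ← Ring.multichoose_eq,
    Ring.multichoose_eq_ascPochhammer_div, rpow_neg h1t, mul_comm] using this

theorem ascPochhammer_eval_nonneg {S : Type*} [Semiring S] [PartialOrder S] [IsOrderedRing S]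
    (n : ℕ) {s : S} (hs : 0 ≤ s) : 0 ≤ (ascPochhammer S n).eval s := by
  induction n with
  | zero => simp
  | succ n ih => rw [ascPochhammer_succ_eval]; exact mul_nonneg ih (by positivity)

theorem norm_ascPochhammer_eval_le {R : Type*} [NormedCommRing R] [NormOneClass R] (n : ℕ)
    {x : R} {y : ℝ} (h : ‖x‖ ≤ y) :
    ‖(ascPochhammer R n).eval x‖ ≤ (ascPochhammer ℝ n).eval y := by
  induction n with
  | zero => simp
  | succ n ih =>
    rw [ascPochhammer_succ_eval, ascPochhammer_succ_eval]
    refine (norm_mul_le _ _).trans (mul_le_mul ih ?_ (norm_nonneg _) ((norm_nonneg _).trans ih))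
    exact (norm_add_le _ _).trans (add_le_add h ((Nat.norm_cast_le n).trans (by simp)))

theorem HasSum.sum_antidiagonal {M A : Type*} [AddCommMonoid M] [TopologicalSpace M]
    [ContinuousAdd M] [RegularSpace M] [AddCommMonoid A] [HasAntidiagonal A]
    {f : A × A → M} {a : M} (h : HasSum f a) :
    HasSum (fun n ↦ ∑ p ∈ antidiagonal n, f p) a :=
  (HasAntidiagonal.sigmaAntidiagonalEquivProd.hasSum_iff.mpr h).sigma
    fun n ↦ (antidiagonal n).hasSum f

noncomputable def laguerreDoubleTerm (a z t : ℂ) (p : ℕ × ℕ) : ℂ :=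
  (-z * t) ^ p.1 / p.1 ! * ((ascPochhammer ℂ p.2).eval (a + p.1) / p.2 ! * t ^ p.2)

section LaguerreDoubleTerm

variable (a z : ℂ) {t : ℂ}

theorem hasSum_laguerreDoubleTerm_row (ht : ‖t‖ < 1) (k : ℕ) :
    HasSum (fun j ↦ laguerreDoubleTerm a z t (k, j)) ((-z * t) ^ k / k ! * (1 - t) ^ (-a - k)) := by
  have := (Complex.hasSum_ascPochhammer_div_factorial_mul_pow (a + k) ht).mul_left
    ((-z * t) ^ k / k !)
  rwa [neg_add'] at this

theorem hasSum_laguerreDoubleTerm_rowSums (ht : t ≠ 1) :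
    HasSum (fun k : ℕ ↦ (-z * t) ^ k / k ! * (1 - t) ^ (-a - k))
      ((1 - t) ^ (-a) * Complex.exp (-z * t / (1 - t))) := by
  have h1t : 1 - t ≠ 0 := sub_ne_zero.mpr ht.symm
  rw [Complex.exp_eq_exp_ℂ]
  refine ((NormedSpace.expSeries_div_hasSum_exp (-z * t / (1 - t))).mul_left
    ((1 - t) ^ (-a))).congr_fun fun k ↦ ?_
  rw [Complex.cpow_sub _ _ h1t, Complex.cpow_natCast, div_pow]
  ring

theorem summable_laguerreDoubleTerm (ht : ‖t‖ < 1) : Summable (laguerreDoubleTerm a z t) := by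
  set r := ‖t‖
  have hr : |r| < 1 := by rwa [abs_norm]
  have h1r : 1 - r ≠ 0 := by linarith
  let g : ℕ × ℕ → ℝ := fun p ↦
    (‖z‖ * r) ^ p.1 / p.1 ! * ((ascPochhammer ℝ p.2).eval (‖a‖ + p.1) / p.2 ! * r ^ p.2)
  have hg : 0 ≤ g := fun p ↦ by
    have := ascPochhammer_eval_nonneg p.2 (s := ‖a‖ + p.1) (by positivity)
    positivity
  have hrow (k : ℕ) : HasSum (fun j ↦ g (k, j)) ((‖z‖ * r) ^ k / k ! * (1 - r) ^ (-‖a‖ - k)) := by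
    have := (Real.hasSum_ascPochhammer_div_factorial_mul_pow (‖a‖ + k) hr).mul_left
      ((‖z‖ * r) ^ k / k !)
    rwa [neg_add'] at this
  have hrowSums : Summable fun k : ℕ ↦ (‖z‖ * r) ^ k / k ! * (1 - r) ^ (-‖a‖ - k) := by
    refine ((Real.summable_pow_div_factorial (‖z‖ * r / (1 - r))).mul_left
      ((1 - r) ^ (-‖a‖))).congr fun k ↦ ?_
    rw [Real.rpow_sub_natCast h1r, div_pow]
    ring
  have hle (p : ℕ × ℕ) : ‖laguerreDoubleTerm a z t p‖ ≤ g p := by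
    have hx : ‖a + p.1‖ ≤ ‖a‖ + p.1 := (norm_add_le _ _).trans (by simp)
    simp only [laguerreDoubleTerm, g, r, norm_mul, norm_div, norm_pow, norm_neg,
      Complex.norm_natCast]
    gcongr
    exact norm_ascPochhammer_eval_le p.2 hx
  refine Summable.of_norm_bounded ?_ hle
  exact (summable_prod_of_nonneg hg).2
    ⟨fun k ↦ (hrow k).summable, by simpa only [(hrow _).tsum_eq] using hrowSums⟩

theorem sum_antidiagonal_laguerreDoubleTerm (α z t : ℂ) (n : ℕ) :
    ∑ p ∈ antidiagonal n, laguerreDoubleTerm (α + 1) z t p = t ^ n * laguerre n α z := by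
  rw [laguerre, Finset.Nat.sum_antidiagonal_eq_sum_range_succ_mk, ← mul_assoc, mul_sum]
  refine sum_congr rfl fun k hk ↦ ?_
  obtain ⟨j, rfl⟩ := Nat.exists_eq_add_of_le (Nat.lt_succ_iff.mp (mem_range.mp hk))
  have hpoch : (ascPochhammer ℂ j).eval (-α - ((k + j : ℕ) : ℂ)) =
      (-1) ^ j * (ascPochhammer ℂ j).eval (α + 1 + k) := by
    rw [show -α - ((k + j : ℕ) : ℂ) = -(α + k + j) by push_cast; ring,
      ascPochhammer_eval_neg_eq_descPochhammer, descPochhammer_eval_eq_ascPochhammer]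
    ring_nf
  have hsign : (-1 : ℂ) ^ j * (-1) ^ j = 1 := by rw [← mul_pow]; simp
  simp only [laguerreDoubleTerm, Nat.add_sub_cancel_left, hpoch]
  linear_combination (-(-z * t) ^ k / k ! * ((ascPochhammer ℂ j).eval (α + 1 + k) / j ! * t ^ j))
    * hsign

end LaguerreDoubleTerm

theorem laguerre_generating_function (t : ℂ) (ht : ‖t‖ < 1) (z α : ℂ) :
    HasSum (fun n : ℕ => t ^ n * laguerre n α z)
      ((1 - t) ^ (-α - 1) * Complex.exp (t * z / (t - 1))) := by
  have ht1 : t ≠ 1 := by rintro rfl; simp at ht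
  have hexp : -z * t / (1 - t) = t * z / (t - 1) := by rw [← neg_div_neg_eq, neg_sub]; ring
  have hsum := (summable_laguerreDoubleTerm (α + 1) z ht).hasSum
  rw [(hsum.prod_fiberwise (hasSum_laguerreDoubleTerm_row (α + 1) z ht)).unique
    (hasSum_laguerreDoubleTerm_rowSums (α + 1) z ht1), neg_add', hexp] at hsum
  simpa only [sum_antidiagonal_laguerreDoubleTerm] using hsum.sum_antidiagonal
end

section
/- Let f : (0,∞) → ℂ be integrable on (1,∞) and suppose there is a finite set Ω ⊂ ℂ and coefficients (f_k)_{k∈Ω} such that f(r) - ∑_{k∈Ω} f_k r^k is integrable on (0,1). Then the value gen∫_0^∞ f := ∑_{k∈Ω, k≠-1} f_k/(k+1) + ∫_0^1 (f(r) - ∑_{k∈Ω} f_k r^k) dr + ∫_1^∞ f(r) dr is independent of the choice of Ω and the coefficients (f_k), provided the coefficients f_k for Re(k) ≤ -1 agree with the (unique) singular coefficients of f. -/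
open MeasureTheory Finset

/-- The value of the generalized integral of `f` associated with a choice of
singular exponents `Ω` and coefficients `c`:
`∑_{k ∈ Ω, k ≠ -1} c k / (k+1) + ∫_0^1 (f r - ∑_{k ∈ Ω} c k r^k) dr + ∫_1^∞ f`. -/
noncomputable def genIntValue (f : ℝ → ℂ) (Ω : Finset ℂ) (c : ℂ → ℂ) : ℂ :=
  (∑ k ∈ Ω.filter (· ≠ -1), c k / (k + 1))
    + (∫ r in Set.Ioo (0 : ℝ) 1, (f r - ∑ k ∈ Ω, c k * (r : ℂ) ^ k))
    + ∫ r in Set.Ioi (1 : ℝ), f r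

lemma integral_Ioo_cpow_aux {k : ℂ} (hk : -1 < k.re) :
    ∫ r in Set.Ioo (0:ℝ) 1, (r : ℂ) ^ k = 1 / (k + 1) := by
  have h1 : k + 1 ≠ 0 := by
    intro h
    rw [add_eq_zero_iff_eq_neg] at h
    subst h
    simp at hk
  rw [← MeasureTheory.integral_Ioc_eq_integral_Ioo,
      ← intervalIntegral.integral_of_le (by norm_num : (0:ℝ) ≤ 1),
      integral_cpow (Or.inl hk)]
  push_cast
  rw [Complex.one_cpow, Complex.zero_cpow h1, sub_zero]

lemma sum_extend_aux {Ω S : Finset ℂ} (hΩS : Ω ⊆ S) (c : ℂ → ℂ) (b : ℂ → ℂ) :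
    ∑ k ∈ S, (if k ∈ Ω then c k else 0) * b k = ∑ k ∈ Ω, c k * b k := by
  rw [← Finset.sum_subset hΩS (fun k _ hk => by rw [if_neg hk, zero_mul])]
  exact Finset.sum_congr rfl fun k hk => by rw [if_pos hk]

lemma genIntValue_extend (f : ℝ → ℂ) (Ω S : Finset ℂ) (c : ℂ → ℂ) (hΩS : Ω ⊆ S) :
    genIntValue f S (fun k => if k ∈ Ω then c k else 0) = genIntValue f Ω c := by
  unfold genIntValue
  congr 2
  · rw [← Finset.sum_subset (Finset.filter_subset_filter _ hΩS)]
    · exact Finset.sum_congr rfl fun k hk => by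
        simp only []
        rw [if_pos (Finset.mem_filter.mp hk).1]
    · intro k hkS hkΩ
      have hkΩ' : k ∉ Ω := fun h =>
        hkΩ (Finset.mem_filter.mpr ⟨h, (Finset.mem_filter.mp hkS).2⟩)
      simp only []
      rw [if_neg hkΩ', zero_div]
  · refine congrArg _ (funext fun r => ?_)
    rw [sum_extend_aux hΩS]

theorem genInt_well_defined (f : ℝ → ℂ)
    (hf : IntegrableOn f (Set.Ioi (1 : ℝ)))
    (Ω Ω' : Finset ℂ) (c c' : ℂ → ℂ)
    (hΩ : IntegrableOn (fun r : ℝ => f r - ∑ k ∈ Ω, c k * (r : ℂ) ^ k)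
      (Set.Ioo (0 : ℝ) 1))
    (hΩ' : IntegrableOn (fun r : ℝ => f r - ∑ k ∈ Ω', c' k * (r : ℂ) ^ k)
      (Set.Ioo (0 : ℝ) 1))
    (hagree : ∀ k : ℂ, k.re ≤ -1 →
      (if k ∈ Ω then c k else 0) = (if k ∈ Ω' then c' k else 0)) :
    genIntValue f Ω c = genIntValue f Ω' c' := by
  classical
  set S : Finset ℂ := Ω ∪ Ω' with hS
  set g : ℂ → ℂ := fun k => if k ∈ Ω then c k else 0 with hg_def
  set g' : ℂ → ℂ := fun k => if k ∈ Ω' then c' k else 0 with hg'_def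
  rw [← genIntValue_extend f Ω S c Finset.subset_union_left,
      ← genIntValue_extend f Ω' S c' Finset.subset_union_right]
  -- integrability of the S-extended integrands
  have hgfun : (fun r : ℝ => f r - ∑ k ∈ S, g k * (r:ℂ)^k)
      = fun r : ℝ => f r - ∑ k ∈ Ω, c k * (r:ℂ)^k := by
    funext r
    rw [hg_def, sum_extend_aux Finset.subset_union_left]
  have hg'fun : (fun r : ℝ => f r - ∑ k ∈ S, g' k * (r:ℂ)^k)
      = fun r : ℝ => f r - ∑ k ∈ Ω', c' k * (r:ℂ)^k := by
    funext r
    rw [hg'_def, sum_extend_aux Finset.subset_union_right]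
  have hgint : IntegrableOn (fun r : ℝ => f r - ∑ k ∈ S, g k * (r:ℂ)^k)
      (Set.Ioo (0:ℝ) 1) := by rw [hgfun]; exact hΩ
  have hg'int : IntegrableOn (fun r : ℝ => f r - ∑ k ∈ S, g' k * (r:ℂ)^k)
      (Set.Ioo (0:ℝ) 1) := by rw [hg'fun]; exact hΩ'
  -- key per-exponent facts
  have hkey : ∀ k ∈ S,
      IntegrableOn (fun r : ℝ => (g k - g' k) * (r:ℂ)^k) (Set.Ioo (0:ℝ) 1) ∧
      ∫ r in Set.Ioo (0:ℝ) 1, (g k - g' k) * (r:ℂ)^k = (g k - g' k) / (k + 1) := by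
    intro k _
    by_cases h0 : g k - g' k = 0
    · refine ⟨?_, ?_⟩
      · simp only [h0, zero_mul]
        exact integrableOn_zero
      · simp [h0]
    · have hk : -1 < k.re := by
        by_contra hle
        push_neg at hle
        exact h0 (sub_eq_zero.mpr (hagree k hle))
      refine ⟨((intervalIntegral.integrableOn_Ioo_cpow_iff zero_lt_one).mpr hk).const_mul _, ?_⟩
      rw [MeasureTheory.integral_const_mul, integral_Ioo_cpow_aux hk, mul_one_div]
  -- the difference of the two sums
  have hSum : (∑ k ∈ S.filter (· ≠ -1), g k / (k + 1))
      - (∑ k ∈ S.filter (· ≠ -1), g' k / (k + 1))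
      = ∑ k ∈ S, (g k - g' k) / (k + 1) := by
    rw [← Finset.sum_sub_distrib]
    simp_rw [← sub_div]
    refine Finset.sum_subset (Finset.filter_subset _ _) ?_
    intro k hkS hkf
    have hk1 : k = -1 := by
      by_contra h
      exact hkf (Finset.mem_filter.mpr ⟨hkS, h⟩)
    have : g k = g' k := by
      apply hagree
      rw [hk1]; norm_num
    rw [this, sub_self, zero_div]
  -- the difference of the two integrals
  have hI : (∫ r in Set.Ioo (0:ℝ) 1, (f r - ∑ k ∈ S, g' k * (r:ℂ)^k))
      - (∫ r in Set.Ioo (0:ℝ) 1, (f r - ∑ k ∈ S, g k * (r:ℂ)^k))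
      = ∑ k ∈ S, (g k - g' k) / (k + 1) := by
    rw [← MeasureTheory.integral_sub hg'int hgint]
    have heq : (fun r : ℝ => (f r - ∑ k ∈ S, g' k * (r:ℂ)^k)
        - (f r - ∑ k ∈ S, g k * (r:ℂ)^k))
        = fun r : ℝ => ∑ k ∈ S, (g k - g' k) * (r:ℂ)^k := by
      funext r
      rw [sub_sub_sub_cancel_left, ← Finset.sum_sub_distrib]
      exact Finset.sum_congr rfl fun k _ => (sub_mul _ _ _).symm
    rw [heq, MeasureTheory.integral_finset_sum S (fun k hk => (hkey k hk).1)]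
    exact Finset.sum_congr rfl fun k hk => (hkey k hk).2
  unfold genIntValue
  linear_combination hSum - hI
end
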